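/- Fix L_C > 0, k > 0, 0 < α < 1/2, −k < β ≤ k, and K ≥ 0. Let κ : Γ_ℂ × (Γ_L ∪ Γ_R) → ℂ satisfy |κ(x,y)| ≤ K e^{−k(|Im x|+|Im y|)}(1+|x|+|y|)^{−3/2} for all x ∈ Γ_ℂ and y ∈ Γ_L ∪ Γ_R. Then there exists C > 0, depending only on k, α, β and K, with the following property: for every admissible contour γ, every 0 < ε < 1, every S ≥ 0 and every measurable σ : ℝ → ℂ with |σ(t)| ≤ S e^{−β|Im γ(t)|}(1+|γ(t)|)^{−α} for all t, setting E_ε = {t ∈ ℝ : e^{−(β+k)|Im γ(t)|} ≤ ε} (for ε < 1 every t ∈ E_ε has γ(t) ∈ Γ_L ∪ Γ_R), one has for every x ∈ Γ_ℂ: the integral ∫_{E_ε} κ(x, γ(t)) σ(t) γ′(t) dt is absolutely convergent and e^{β|Im x|}(1+|x|)^{α+1/2} · |∫_{E_ε} κ(x, γ(t)) σ(t) γ′(t) dt| ≤ C ε S. -/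

import Mathlib

open MeasureTheory Set

noncomputable section

noncomputable section

/-- The region `Γ_L = {z : Re z < -L, Im z ≤ 0}`. -/
def GammaL (L : ℝ) : Set ℂ := {z | z.re < -L ∧ z.im ≤ 0}

/-- The region `Γ_M = {z : |Re z| ≤ L, Im z = 0}`. -/
def GammaM (L : ℝ) : Set ℂ := {z | |z.re| ≤ L ∧ z.im = 0}

/-- The region `Γ_R = {z : Re z > L, Im z ≥ 0}`. -/
def GammaR (L : ℝ) : Set ℂ := {z | L < z.re ∧ 0 ≤ z.im}

/-- The contour region `Γ_ℂ = Γ_L ∪ Γ_M ∪ Γ_R`. -/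
def GammaC (L : ℝ) : Set ℂ := GammaL L ∪ GammaM L ∪ GammaR L

/-- The weight `e^{β|Im x|} (1+|x|)^α`. -/
def cweight (α β : ℝ) (x : ℂ) : ℝ :=
  Real.exp (β * |x.im|) * (1 + ‖x‖) ^ α

/-- The norm `‖f‖_{α,β} = sup_{x ∈ Γ_ℂ} e^{β|Im x|}(1+|x|)^α |f x|`. -/
def cnorm (L α β : ℝ) (f : ℂ → ℂ) : ℝ :=
  sSup ((fun x => cweight α β x * ‖f x‖) '' GammaC L)

/-- Membership in the space `𝒞^{α,β}`: continuous on `Γ_ℂ`, analytic on the interiors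
of `Γ_L` and `Γ_R`, and with finite norm `‖f‖_{α,β}` (the weighted values are bounded). -/
def MemC (L α β : ℝ) (f : ℂ → ℂ) : Prop :=
  ContinuousOn f (GammaC L) ∧
  AnalyticOnNhd ℂ f (interior (GammaL L)) ∧
  AnalyticOnNhd ℂ f (interior (GammaR L)) ∧
  BddAbove ((fun x => cweight α β x * ‖f x‖) '' GammaC L)

/-- An admissible contour: a smooth unit-speed curve through the origin whose image lies
in `Γ_ℂ`, with nondecreasing real and imaginary parts, and whose real part is onto `ℝ`. -/
def Admissible (L : ℝ) (γ : ℝ → ℂ) : Prop :=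
  ContDiff ℝ (⊤ : ℕ∞) γ ∧ (∀ t, ‖deriv γ t‖ = 1) ∧ γ 0 = 0 ∧
  (∀ t, γ t ∈ GammaC L) ∧ Monotone (fun t => (γ t).re) ∧
  Monotone (fun t => (γ t).im) ∧ Function.Surjective (fun t => (γ t).re)

lemma nonneg_deriv_of_monotone {f : ℝ → ℝ} (hf : Monotone f) {f' s : ℝ}
    (h : HasDerivAt f f' s) : 0 ≤ f' := by
  have h1 := hasDerivAt_iff_tendsto_slope.mp h
  refine ge_of_tendsto h1 (Filter.eventually_of_mem self_mem_nhdsWithin ?_)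
  intro u hu
  have hu' : u ≠ s := hu
  rcases hu'.lt_or_gt with h2 | h2
  · have h3 : f u ≤ f s := hf h2.le
    rw [slope_def_field]
    have : u - s < 0 := by linarith
    rw [div_nonneg_iff]
    exact Or.inr ⟨by linarith, this.le⟩
  · rw [slope_def_field]
    exact div_nonneg (by linarith [hf h2.le]) (by linarith)

lemma tail_majorant_integrable {α : ℝ} (hα0 : 0 < α) {a : ℝ} (ha : 0 ≤ a) :
    Integrable (fun t : ℝ => (1+a+|t|/2) ^ (-(3/2:ℝ)) * (1+|t|/2) ^ (-α)) := by
  have hc : Continuous (fun t : ℝ => (1+a+|t|/2) ^ (-(3/2:ℝ)) * (1+|t|/2) ^ (-α)) := by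
    apply Continuous.mul
    · exact Continuous.rpow_const (by continuity) (fun t => Or.inl (by positivity))
    · exact Continuous.rpow_const (by continuity) (fun t => Or.inl (by positivity))
  have hint : Integrable (fun t : ℝ => (2:ℝ)^((3:ℝ)/2) * (1+‖t‖) ^ (-(3/2:ℝ))) :=
    (integrable_one_add_norm (by norm_num)).const_mul _
  refine hint.mono' hc.aestronglyMeasurable (ae_of_all _ fun t => ?_)
  rw [Real.norm_eq_abs, abs_of_nonneg (by positivity)]
  have h1 : (1+a+|t|/2 : ℝ) ^ (-(3/2:ℝ)) ≤ (1+|t|/2) ^ (-(3/2:ℝ)) :=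
    Real.rpow_le_rpow_of_nonpos (by positivity) (by linarith) (by norm_num)
  have h2 : (1+|t|/2 : ℝ) ^ (-α) ≤ 1 :=
    Real.rpow_le_one_of_one_le_of_nonpos (by linarith [abs_nonneg t]) (by linarith)
  have h3 : (1+|t|/2 : ℝ) ^ (-(3/2:ℝ)) ≤ ((1+|t|)/2) ^ (-(3/2:ℝ)) :=
    Real.rpow_le_rpow_of_nonpos (by positivity) (by linarith [abs_nonneg t]) (by norm_num)
  have h4 : ((1+|t|:ℝ)/2) ^ (-(3/2:ℝ)) = (2:ℝ)^((3:ℝ)/2) * (1+|t|) ^ (-(3/2:ℝ)) := by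
    rw [Real.div_rpow (by positivity) (by norm_num), Real.rpow_neg (by norm_num : (0:ℝ) ≤ 2),
      div_inv_eq_mul]
    ring
  calc (1+a+|t|/2 : ℝ) ^ (-(3/2:ℝ)) * (1+|t|/2) ^ (-α)
      ≤ (1+|t|/2 : ℝ) ^ (-(3/2:ℝ)) * 1 :=
        mul_le_mul h1 h2 (by positivity) (by positivity)
    _ ≤ ((1+|t|:ℝ)/2) ^ (-(3/2:ℝ)) := by rw [mul_one]; exact h3
    _ = (2:ℝ)^((3:ℝ)/2) * (1+|t|) ^ (-(3/2:ℝ)) := h4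


lemma tail_integral_le {α : ℝ} (hα0 : 0 < α) (hα : α < 1/2) {a : ℝ} (ha : 0 ≤ a) :
    (∫ t : ℝ, (1+a+|t|/2) ^ (-(3/2:ℝ)) * (1+|t|/2) ^ (-α)) ≤ 16 * (1+a) ^ (-(α+1/2)) := by
  set f : ℝ → ℝ := fun u => (1+a+u/2) ^ (-(3/2:ℝ)) * (1+u/2) ^ (-α) with hf
  have h1 : (∫ t : ℝ, f |t|) = 2 * ∫ u in Ioi (0:ℝ), f u := integral_comp_abs
  have hIoi : IntegrableOn f (Ioi 0) :=
    ((tail_majorant_integrable hα0 ha).integrableOn (s := Ioi 0)).congr_fun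
      (fun u hu => by rw [hf]; simp only; rw [abs_of_nonneg (le_of_lt hu)]) measurableSet_Ioi
  have hsplit : Ioc (0:ℝ) (2*a) ∪ Ioi (2*a) = Ioi 0 := Ioc_union_Ioi_eq_Ioi (by linarith)
  have hdisj : Disjoint (Ioc (0:ℝ) (2*a)) (Ioi (2*a)) :=
    Set.disjoint_left.mpr fun u hu1 hu2 => absurd hu1.2 (not_le.mpr hu2)
  -- the interval piece
  have hP1 : (∫ u in Ioc (0:ℝ) (2*a), f u) ≤ 4 * (1+a) ^ (-(α+1/2)) := by
    have hmaj : IntegrableOn (fun u : ℝ => (1+a) ^ (-(3/2:ℝ)) * (1+u/2) ^ (-α)) (Ioc 0 (2*a)) := by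
      apply (ContinuousOn.integrableOn_compact isCompact_Icc ?_).mono_set Ioc_subset_Icc_self
      apply ContinuousOn.mul continuousOn_const
      apply ContinuousOn.rpow_const (by fun_prop)
      intro u hu
      exact Or.inl (by nlinarith [hu.1])
    have hmono : (∫ u in Ioc (0:ℝ) (2*a), f u) ≤
        ∫ u in Ioc (0:ℝ) (2*a), (1+a) ^ (-(3/2:ℝ)) * (1+u/2) ^ (-α) := by
      apply setIntegral_mono_on (hIoi.mono_set Ioc_subset_Ioi_self) hmaj measurableSet_Ioc
      intro u hu
      rw [hf]; simp only
      apply mul_le_mul_of_nonneg_right _ (Real.rpow_nonneg (by nlinarith [hu.1]) _)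
      exact Real.rpow_le_rpow_of_nonpos (by positivity) (by nlinarith [hu.1]) (by norm_num)
    have hFT : (∫ u in Ioc (0:ℝ) (2*a), (1+u/2) ^ (-α)) = (2/(1-α)) * ((1+a)^(1-α) - 1) := by
      rw [← intervalIntegral.integral_of_le (by linarith)]
      have hder : ∀ u ∈ uIcc (0:ℝ) (2*a), HasDerivAt (fun v : ℝ => (2/(1-α)) * (1+v/2)^(1-α))
          ((1+u/2) ^ (-α)) u := by
        intro u hu
        rw [uIcc_of_le (by linarith)] at hu
        have h1 : HasDerivAt (fun v : ℝ => 1+v/2) (1/2) u := by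
          simpa using ((hasDerivAt_id u).div_const 2).const_add 1
        have h2 := (h1.rpow_const (p := 1-α) (Or.inl (by nlinarith [hu.1]))).const_mul (2/(1-α))
        refine h2.congr_deriv ?_
        symm
        rw [show (1-α-1 : ℝ) = -α by ring]
        have hne : (1-α) ≠ 0 := sub_ne_zero.mpr (by linarith)
        field_simp
      rw [intervalIntegral.integral_eq_sub_of_hasDerivAt hder]
      · rw [show (1 + 2*a/2 : ℝ) = 1 + a by ring]
        simp [Real.one_rpow]
        ring
      · apply ContinuousOn.intervalIntegrable
        apply ContinuousOn.rpow_const (by fun_prop)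
        intro u hu
        rw [uIcc_of_le (by linarith)] at hu
        exact Or.inl (by nlinarith [hu.1])
    rw [integral_const_mul] at hmono
    have hb1 : (2/(1-α)) * ((1+a)^(1-α) - 1) ≤ 4 * (1+a)^(1-α) := by
      have e1 : (0:ℝ) < 1 - α := by linarith
      have e2 : 2/(1-α) ≤ 4 := by rw [div_le_iff₀ e1]; linarith
      have e3 : (0:ℝ) ≤ (1+a)^(1-α) := by positivity
      have e0 : (0:ℝ) ≤ 2/(1-α) := by positivity
      nlinarith [mul_le_mul_of_nonneg_right e2 e3]
    have hb2 : (1+a:ℝ) ^ (-(3/2:ℝ)) * (4 * (1+a)^(1-α)) = 4 * (1+a) ^ (-(α+1/2)) := by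
      rw [mul_comm ((1+a:ℝ) ^ (-(3/2:ℝ))), mul_assoc, ← Real.rpow_add (by linarith)]
      norm_num
      ring_nf
    calc (∫ u in Ioc (0:ℝ) (2*a), f u)
        ≤ (1+a:ℝ) ^ (-(3/2:ℝ)) * ((2/(1-α)) * ((1+a)^(1-α) - 1)) := by rw [← hFT]; exact hmono
      _ ≤ (1+a:ℝ) ^ (-(3/2:ℝ)) * (4 * (1+a)^(1-α)) :=
          mul_le_mul_of_nonneg_left hb1 (by positivity)
      _ = 4 * (1+a) ^ (-(α+1/2)) := hb2
  -- the tail piece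
  have hder2 : ∀ u ∈ Ici (2*a), HasDerivAt (fun v : ℝ => -(2/(1/2+α)) * (1+v/2) ^ (-(1/2+α)))
      ((1+u/2) ^ (-(3/2+α))) u := by
    intro u hu
    have hu0 : 0 ≤ u := le_trans (by linarith) hu
    have h1 : HasDerivAt (fun v : ℝ => 1+v/2) (1/2) u := by
      simpa using ((hasDerivAt_id u).div_const 2).const_add 1
    have h2 := (h1.rpow_const (p := -(1/2+α)) (Or.inl (by positivity))).const_mul (-(2/(1/2+α)))
    refine h2.congr_deriv ?_
    symm
    rw [show (-(1/2+α)-1 : ℝ) = -(3/2+α) by ring]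
    have hne : (1/2+α) ≠ 0 := by positivity
    field_simp
  have htend : Filter.Tendsto (fun u : ℝ => -(2/(1/2+α)) * (1+u/2) ^ (-(1/2+α)))
      Filter.atTop (nhds 0) := by
    have hb : Filter.Tendsto (fun u : ℝ => 1+u/2) Filter.atTop Filter.atTop := by
      apply Filter.tendsto_atTop_add_const_left
      exact Filter.Tendsto.atTop_div_const (by norm_num) Filter.tendsto_id
    have := (tendsto_rpow_neg_atTop (by linarith : (0:ℝ) < 1/2+α)).comp hb
    have h2 := this.const_mul (-(2/(1/2+α)))
    simpa using h2
  have hpos2 : ∀ u ∈ Ioi (2*a), 0 ≤ (1+u/2 : ℝ) ^ (-(3/2+α)) := by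
    intro u hu
    have : (0:ℝ) < u := lt_of_le_of_lt (by linarith) hu
    positivity
  have heq2 : (∫ u in Ioi (2*a), (1+u/2 : ℝ) ^ (-(3/2+α)))
      = (2/(1/2+α)) * (1+a) ^ (-(1/2+α)) := by
    rw [integral_Ioi_of_hasDerivAt_of_nonneg' hder2 hpos2 htend]
    rw [show (1 + 2*a/2 : ℝ) = 1 + a by ring]
    ring
  have hint2 : IntegrableOn (fun u : ℝ => (1+u/2) ^ (-(3/2+α))) (Ioi (2*a)) :=
    integrableOn_Ioi_deriv_of_nonneg' hder2 hpos2 htend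
  have hP2 : (∫ u in Ioi (2*a), f u) ≤ 4 * (1+a) ^ (-(α+1/2)) := by
    have hmono : (∫ u in Ioi (2*a), f u) ≤ ∫ u in Ioi (2*a), (1+u/2 : ℝ) ^ (-(3/2+α)) := by
      apply setIntegral_mono_on (hIoi.mono_set (Ioi_subset_Ioi (by linarith))) hint2
        measurableSet_Ioi
      intro u hu
      have hu0 : (0:ℝ) < u := lt_of_le_of_lt (by linarith) hu
      rw [hf]; simp only
      calc (1+a+u/2 : ℝ) ^ (-(3/2:ℝ)) * (1+u/2) ^ (-α)
          ≤ (1+u/2 : ℝ) ^ (-(3/2:ℝ)) * (1+u/2) ^ (-α) :=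
            mul_le_mul_of_nonneg_right
              (Real.rpow_le_rpow_of_nonpos (by positivity) (by linarith) (by norm_num))
              (by positivity)
        _ = (1+u/2 : ℝ) ^ (-(3/2+α)) := by
            rw [← Real.rpow_add (by positivity)]
            norm_num
            ring_nf
    have hb : (2/(1/2+α)) * (1+a:ℝ) ^ (-(1/2+α)) ≤ 4 * (1+a) ^ (-(α+1/2)) := by
      rw [show (-(1/2+α) : ℝ) = -(α+1/2) by ring]
      apply mul_le_mul_of_nonneg_right _ (by positivity)
      rw [div_le_iff₀ (by linarith)]
      linarith
    calc (∫ u in Ioi (2*a), f u) ≤ _ := hmono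
      _ = (2/(1/2+α)) * (1+a:ℝ) ^ (-(1/2+α)) := heq2
      _ ≤ 4 * (1+a) ^ (-(α+1/2)) := hb
  -- combine
  have hIoiSplit : (∫ u in Ioi (0:ℝ), f u)
      = (∫ u in Ioc (0:ℝ) (2*a), f u) + ∫ u in Ioi (2*a), f u := by
    rw [← hsplit, setIntegral_union hdisj measurableSet_Ioi
      (hIoi.mono_set Ioc_subset_Ioi_self) (hIoi.mono_set (Ioi_subset_Ioi (by linarith)))]
  have hgoal : (∫ t : ℝ, f |t|) ≤ 16 * (1+a) ^ (-(α+1/2)) := by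
    rw [h1, hIoiSplit]
    linarith
  simpa using hgoal

lemma admissible_param_le {L : ℝ} {γ : ℝ → ℂ} (h : Admissible L γ) (t : ℝ) :
    |t| ≤ 2 * ‖γ t‖ := by
  obtain ⟨hsm, hunit, h0, hmem, hre, him, hsurj⟩ := h
  have hd : Differentiable ℝ γ := hsm.differentiable (by simp)
  have hre' : ∀ s, HasDerivAt (fun u => (γ u).re) (deriv γ s).re s := fun s =>
    Complex.reCLM.hasFDerivAt.comp_hasDerivAt s (hd s).hasDerivAt
  have him' : ∀ s, HasDerivAt (fun u => (γ u).im) (deriv γ s).im s := fun s =>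
    Complex.imCLM.hasFDerivAt.comp_hasDerivAt s (hd s).hasDerivAt
  have hre0 : ∀ s, 0 ≤ (deriv γ s).re := fun s => nonneg_deriv_of_monotone hre (hre' s)
  have him0 : ∀ s, 0 ≤ (deriv γ s).im := fun s => nonneg_deriv_of_monotone him (him' s)
  have hsum : ∀ s, 1 ≤ (deriv γ s).re + (deriv γ s).im := by
    intro s
    have h2 : ‖deriv γ s‖ ^ 2 = 1 := by rw [hunit s]; norm_num
    rw [Complex.sq_norm, Complex.normSq_apply] at h2
    nlinarith [hre0 s, him0 s]
  have hg' : ∀ s, HasDerivAt (fun u => (γ u).re + (γ u).im - u)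
      ((deriv γ s).re + (deriv γ s).im - 1) s := fun s =>
    ((hre' s).add (him' s)).sub (hasDerivAt_id s)
  have hgmono : Monotone (fun u => (γ u).re + (γ u).im - u) := by
    apply monotone_of_deriv_nonneg
    · exact fun s => (hg' s).differentiableAt
    · intro s
      rw [(hg' s).deriv]
      linarith [hsum s]
  have hg0 : (γ 0).re + (γ 0).im - 0 = 0 := by rw [h0]; simp
  have habs_re : |(γ t).re| ≤ ‖γ t‖ := Complex.abs_re_le_norm _
  have habs_im : |(γ t).im| ≤ ‖γ t‖ := Complex.abs_im_le_norm _
  rcases le_total 0 t with ht | ht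
  · have h1 : (0:ℝ) ≤ (γ t).re + (γ t).im - t := by
      have := hgmono ht
      simpa [hg0] using this
    rw [abs_of_nonneg ht]
    have h2 : (γ t).re ≤ ‖γ t‖ := (le_abs_self _).trans habs_re
    have h3 : (γ t).im ≤ ‖γ t‖ := (le_abs_self _).trans habs_im
    linarith
  · have h1 : (γ t).re + (γ t).im - t ≤ 0 := by
      have := hgmono ht
      simpa [hg0] using this
    rw [abs_of_nonpos ht]
    have h2 : -(γ t).re ≤ ‖γ t‖ := (neg_le_abs _).trans habs_re
    have h3 : -(γ t).im ≤ ‖γ t‖ := (neg_le_abs _).trans habs_im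
    linarith

/-- Truncation estimate: there is `C > 0` depending only on
`k, α, β, K` such that for any kernel with the `𝒜_{3/2}`-type decay, any admissible
contour `γ`, any `0 < ε < 1` and any density `σ` with the `𝒞^{α,β}`-bound along `γ`,
the tail set `E_ε = {t : e^{-(β+k)|Im γ(t)|} ≤ ε}` lies over `Γ_L ∪ Γ_R`, and the
integral over `E_ε` converges absolutely with
`e^{β|Im x|}(1+|x|)^{α+1/2} |∫_{E_ε} κ(x,γ(t))σ(t)γ'(t) dt| ≤ C ε S`. -/
theorem statement_7 (k α β K : ℝ) (hk : 0 < k)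
    (hα0 : 0 < α) (hα : α < 1/2) (hβl : -k < β) (hβu : β ≤ k) (hK : 0 ≤ K) :
    ∃ C > 0, ∀ L : ℝ, 0 < L → ∀ κ : ℂ → ℂ → ℂ,
      (∀ x ∈ GammaC L, ∀ y ∈ GammaL L ∪ GammaR L,
        ‖κ x y‖ ≤ K * Real.exp (-k * (|x.im| + |y.im|)) *
          (1 + ‖x‖ + ‖y‖) ^ (-(3/2 : ℝ))) →
      ∀ γ : ℝ → ℂ, Admissible L γ →
      (∀ x : ℂ, Measurable fun t => κ x (γ t)) →
      ∀ ε : ℝ, 0 < ε → ε < 1 →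
      ∀ S : ℝ, 0 ≤ S →
      ∀ σ : ℝ → ℂ, Measurable σ →
      (∀ t : ℝ, ‖σ t‖ ≤
        S * Real.exp (-β * |(γ t).im|) * (1 + ‖γ t‖) ^ (-α)) →
      (∀ t ∈ {t : ℝ | Real.exp (-(β + k) * |(γ t).im|) ≤ ε}, γ t ∈ GammaL L ∪ GammaR L) ∧
      ∀ x ∈ GammaC L,
        IntegrableOn (fun t => κ x (γ t) * σ t * deriv γ t)
          {t : ℝ | Real.exp (-(β + k) * |(γ t).im|) ≤ ε} volume ∧
        Real.exp (β * |x.im|) * (1 + ‖x‖) ^ (α + 1/2) *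
          ‖∫ t in {t : ℝ | Real.exp (-(β + k) * |(γ t).im|) ≤ ε},
            κ x (γ t) * σ t * deriv γ t‖ ≤ C * ε * S := by
  refine ⟨16 * K + 1, by positivity, ?_⟩
  intro L hL κ hκ γ hadm hκm ε hε hε1 S hS σ hσm hσ
  obtain ⟨hsm, hunit, h0, hmem, hre, him, hsurj⟩ := hadm
  set E : Set ℝ := {t : ℝ | Real.exp (-(β + k) * |(γ t).im|) ≤ ε} with hE_def
  have hpart1 : ∀ t ∈ E, γ t ∈ GammaL L ∪ GammaR L := by
    intro t ht
    rcases hmem t with (hl | hm) | hr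
    · exact Or.inl hl
    · exfalso
      have h2 : (γ t).im = 0 := hm.2
      have h3 : Real.exp (-(β + k) * |(γ t).im|) ≤ ε := ht
      rw [h2] at h3
      simp at h3
      linarith
    · exact Or.inr hr
  refine ⟨hpart1, ?_⟩
  intro x hx
  have hE : MeasurableSet E := by
    have hf : Continuous fun t => Real.exp (-(β + k) * |(γ t).im|) := by
      apply Real.continuous_exp.comp
      exact continuous_const.mul ((continuous_abs).comp (Complex.continuous_im.comp hsm.continuous))
    exact measurableSet_le hf.measurable measurable_const
  set A : ℝ := ‖x‖ with hA_def
  have hA : 0 ≤ A := norm_nonneg x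
  set c0 : ℝ := K * S * ε * Real.exp (-k * |x.im|) with hc0_def
  have hc0 : 0 ≤ c0 := by positivity
  set h : ℝ → ℝ := fun t => (1+A+|t|/2) ^ (-(3/2:ℝ)) * (1+|t|/2) ^ (-α) with hh_def
  have hmaj : Integrable (fun t : ℝ => c0 * h t) :=
    (tail_majorant_integrable hα0 hA).const_mul c0
  have key : ∀ t ∈ E, ‖κ x (γ t) * σ t * deriv γ t‖ ≤ c0 * h t := by
    intro t ht
    set B : ℝ := ‖γ t‖ with hB_def
    have hB : 0 ≤ B := norm_nonneg _
    have htB : |t| / 2 ≤ B := by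
      have := admissible_param_le ⟨hsm, hunit, h0, hmem, hre, him, hsurj⟩ t
      linarith
    have h1 := hκ x hx (γ t) (hpart1 t ht)
    have h2 := hσ t
    have hnorm : ‖κ x (γ t) * σ t * deriv γ t‖ = ‖κ x (γ t)‖ * ‖σ t‖ := by
      rw [norm_mul, norm_mul, hunit t, mul_one]
    rw [hnorm]
    have habs : (0:ℝ) ≤ |t| := abs_nonneg t
    have step1 : ‖κ x (γ t)‖ * ‖σ t‖ ≤
        (K * Real.exp (-k * (|x.im| + |(γ t).im|)) * (1 + A + B) ^ (-(3/2:ℝ))) *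
        (S * Real.exp (-β * |(γ t).im|) * (1 + B) ^ (-α)) := by
      apply mul_le_mul h1 h2 (norm_nonneg _)
      positivity
    have hexp : Real.exp (-k * (|x.im| + |(γ t).im|)) * Real.exp (-β * |(γ t).im|) =
        Real.exp (-k * |x.im|) * Real.exp (-(β + k) * |(γ t).im|) := by
      rw [← Real.exp_add, ← Real.exp_add]
      congr 1
      ring
    have step2 : (K * Real.exp (-k * (|x.im| + |(γ t).im|)) * (1 + A + B) ^ (-(3/2:ℝ))) *
        (S * Real.exp (-β * |(γ t).im|) * (1 + B) ^ (-α)) =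
        (K * S * Real.exp (-k * |x.im|)) *
          (Real.exp (-(β + k) * |(γ t).im|) * ((1 + A + B) ^ (-(3/2:ℝ)) * (1 + B) ^ (-α))) := by
      rw [show (K * Real.exp (-k * (|x.im| + |(γ t).im|)) * (1 + A + B) ^ (-(3/2:ℝ))) *
        (S * Real.exp (-β * |(γ t).im|) * (1 + B) ^ (-α)) =
        (K * S * ((1 + A + B) ^ (-(3/2:ℝ)) * (1 + B) ^ (-α))) *
          (Real.exp (-k * (|x.im| + |(γ t).im|)) * Real.exp (-β * |(γ t).im|)) by ring, hexp]
      ring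
    have hr1 : (1 + A + B : ℝ) ^ (-(3/2:ℝ)) ≤ (1 + A + |t|/2) ^ (-(3/2:ℝ)) :=
      Real.rpow_le_rpow_of_nonpos (by positivity) (by linarith) (by norm_num)
    have hr2 : (1 + B : ℝ) ^ (-α) ≤ (1 + |t|/2) ^ (-α) :=
      Real.rpow_le_rpow_of_nonpos (by positivity) (by linarith) (by linarith)
    have step3 : Real.exp (-(β + k) * |(γ t).im|) * ((1 + A + B) ^ (-(3/2:ℝ)) * (1 + B) ^ (-α))
        ≤ ε * h t := by
      apply mul_le_mul ht (mul_le_mul hr1 hr2 (by positivity) (by positivity))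
        (by positivity) hε.le
    calc ‖κ x (γ t)‖ * ‖σ t‖
        ≤ _ := step1
      _ = _ := step2
      _ ≤ (K * S * Real.exp (-k * |x.im|)) * (ε * h t) :=
          mul_le_mul_of_nonneg_left step3 (by positivity)
      _ = c0 * h t := by rw [hc0_def]; ring
  have hmeas : Measurable (fun t => κ x (γ t) * σ t * deriv γ t) :=
    ((hκm x).mul hσm).mul (hsm.continuous_deriv (by simp)).measurable
  have hInt : IntegrableOn (fun t => κ x (γ t) * σ t * deriv γ t) E volume := by
    refine (hmaj.restrict (s := E)).mono' hmeas.aestronglyMeasurable ?_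
    exact (ae_restrict_iff' hE).2 (ae_of_all _ key)
  refine ⟨hInt, ?_⟩
  have habs_int : ‖∫ t in E, κ x (γ t) * σ t * deriv γ t‖ ≤
      c0 * (16 * (1+A) ^ (-(α+1/2))) := by
    calc ‖∫ t in E, κ x (γ t) * σ t * deriv γ t‖
        = ‖∫ t in E, κ x (γ t) * σ t * deriv γ t‖ := rfl
      _ ≤ ∫ t in E, ‖κ x (γ t) * σ t * deriv γ t‖ := norm_integral_le_integral_norm _
      _ ≤ ∫ t in E, c0 * h t := setIntegral_mono_on hInt.norm hmaj.integrableOn hE key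
      _ ≤ ∫ t, c0 * h t := setIntegral_le_integral hmaj (ae_of_all _ fun t => by positivity)
      _ = c0 * ∫ t, h t := integral_const_mul c0 h
      _ ≤ c0 * (16 * (1+A) ^ (-(α+1/2))) :=
          mul_le_mul_of_nonneg_left (tail_integral_le hα0 hα hA) hc0
  have hcancel : (1 + A : ℝ) ^ (α + 1/2) * (1 + A) ^ (-(α+1/2)) = 1 := by
    rw [← Real.rpow_add (by linarith), show (α + 1/2) + -(α+1/2) = 0 by ring, Real.rpow_zero]
  have hexp1 : Real.exp (β * |x.im|) * Real.exp (-k * |x.im|) ≤ 1 := by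
    rw [← Real.exp_add]
    apply Real.exp_le_one_iff.mpr
    have : (β - k) * |x.im| ≤ 0 :=
      mul_nonpos_iff.mpr (Or.inr ⟨by linarith, abs_nonneg _⟩)
    nlinarith [abs_nonneg x.im]
  have hW : (0:ℝ) ≤ Real.exp (β * |x.im|) * (1 + A) ^ (α + 1/2) := by positivity
  calc Real.exp (β * |x.im|) * (1 + A) ^ (α + 1/2) *
        ‖∫ t in E, κ x (γ t) * σ t * deriv γ t‖
      ≤ Real.exp (β * |x.im|) * (1 + A) ^ (α + 1/2) * (c0 * (16 * (1+A) ^ (-(α+1/2)))) :=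
        mul_le_mul_of_nonneg_left habs_int hW
    _ = 16 * K * S * ε * (Real.exp (β * |x.im|) * Real.exp (-k * |x.im|)) *
        ((1 + A) ^ (α + 1/2) * (1 + A) ^ (-(α+1/2))) := by rw [hc0_def]; ring
    _ = 16 * K * S * ε * (Real.exp (β * |x.im|) * Real.exp (-k * |x.im|)) := by
        rw [hcancel, mul_one]
    _ ≤ 16 * K * S * ε * 1 := by
        apply mul_le_mul_of_nonneg_left hexp1 (by positivity)
    _ ≤ (16 * K + 1) * ε * S := by nlinarith

end
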